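/- Let u₁ >_lex u₂ >_lex u' be nonempty words over a well-ordered alphabet such that u₁u₂ and u' are Lyndon words. Then u₁u₂u' >_lex u₁u' >_lex u' and u₁u₂u' >_lex u₂u' >_lex u'. -/

import Mathlib

/-! Both claims about `u'` follow from one observation: a Lyndon word `u'` lying below a nonempty
word `v` also lies below `v u'`. Either `u' ≺ v` already, or `u' = v w` with `w` nonempty, and
then the Lyndon property `w <_lex u'` gives `u' = v w <_lex v u'` after prepending `v`.
Prepending `u₁` to `u' <_lex u₂ u'` gives `u₁ u' <_lex u₁ u₂ u'`. Finally the Lyndon property of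
`u₁ u₂` gives `u₂ <_lex u₁ u₂`; the longer word cannot be a prefix of the shorter one, so this
is a letter difference `≺`, which survives appending `u'`. -/

variable {X : Type*} [LinearOrder X] [WellFoundedLT X]

/-- The partial order `≺` on words: `u ≺ v` iff `u = r ++ x :: s`, `v = r ++ y :: t`
with letters `x < y`. -/
def Prec (u v : List X) : Prop :=
  ∃ (r s t : List X) (x y : X), x < y ∧ u = r ++ x :: s ∧ v = r ++ y :: t

/-- The pseudo-lexicographic order: `u <_lex v` iff `v` is a proper prefix of `u` or `u ≺ v`. -/
def PLex (u v : List X) : Prop :=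
  (v <+: u ∧ v ≠ u) ∨ Prec u v

/-- `u ≤_lex v`. -/
def PLexLe (u v : List X) : Prop := u = v ∨ PLex u v

/-- A Lyndon word (Kharchenko convention): a nonempty word strictly greater in the
pseudo-lexicographic order than each of its proper nonempty suffixes. -/
def IsLyndon (u : List X) : Prop :=
  u ≠ [] ∧ ∀ v w : List X, u = v ++ w → v ≠ [] → w ≠ [] → PLex w u

section

variable {α : Type*} [LinearOrder α]

theorem not_prec_nil_left (v : List α) : ¬ Prec [] v := by
  rintro ⟨r, s, t, x, y, -, hu, -⟩
  simp at hu

theorem not_prec_nil_right (u : List α) : ¬ Prec u [] := by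
  rintro ⟨r, s, t, x, y, -, -, hv⟩
  simp at hv

theorem prec_cons_cons_iff {x y : α} {u v : List α} :
    Prec (x :: u) (y :: v) ↔ x < y ∨ x = y ∧ Prec u v := by
  constructor
  · rintro ⟨_ | ⟨z, r⟩, s, t, a, b, hab, hu, hv⟩ <;>
      simp only [List.nil_append, List.cons_append, List.cons.injEq] at hu hv
    · exact .inl (hu.1 ▸ hv.1 ▸ hab)
    · exact .inr ⟨hu.1.trans hv.1.symm, r, s, t, a, b, hab, hu.2, hv.2⟩
  · rintro (hxy | ⟨rfl, r, s, t, a, b, hab, rfl, rfl⟩)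
    · exact ⟨[], u, v, x, y, hxy, rfl, rfl⟩
    · exact ⟨x :: r, s, t, a, b, hab, rfl, rfl⟩

theorem Prec.append {u v : List α} (h : Prec u v) (w z : List α) : Prec (u ++ w) (v ++ z) := by
  obtain ⟨r, s, t, x, y, hxy, rfl, rfl⟩ := h
  exact ⟨r, s ++ w, t ++ z, x, y, hxy, by simp, by simp⟩

theorem plex_iff_lex {u v : List α} : PLex u v ↔ List.Lex (· > ·) v u := by
  induction v generalizing u with
  | nil => cases u <;> simp [PLex, not_prec_nil_right]
  | cons y v ih =>
    cases u with
    | nil => simp [PLex, not_prec_nil_left]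
    | cons x u =>
      rw [List.cons_lex_cons_iff, PLex, prec_cons_cons_iff, ← ih, PLex, List.cons_prefix_cons]
      grind

theorem PLex.trans {u v w : List α} (huv : PLex u v) (hvw : PLex v w) : PLex u w := by
  rw [plex_iff_lex] at *
  exact List.lex_trans gt_trans hvw huv

theorem PLex.append_left {u v : List α} (h : PLex u v) (c : List α) : PLex (c ++ u) (c ++ v) :=
  plex_iff_lex.2 ((plex_iff_lex.1 h).append_left _ c)

theorem IsLyndon.plex_append_of_plex {u v : List α} (hu : IsLyndon u) (hv : v ≠ [])
    (h : PLex u v) : PLex u (v ++ u) := by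
  rcases h with ⟨⟨w, rfl⟩, hne⟩ | hprec
  · have hw : w ≠ [] := by
      rintro rfl
      exact hne (List.append_nil v).symm
    exact (hu.2 v w rfl hv hw).append_left v
  · exact .inr (by simpa using hprec.append [] u)

theorem IsLyndon.prec_of_append {v w : List α} (hL : IsLyndon (v ++ w)) (hv : v ≠ [])
    (hw : w ≠ []) : Prec w (v ++ w) := by
  refine (hL.2 v w rfl hv hw).resolve_left fun ⟨hpre, _⟩ => hv ?_
  simpa using hpre.length_le

end

theorem plex_concat_chain_general (u₁ u₂ u' : List X) (h₁ : u₁ ≠ []) (h₂ : u₂ ≠ [])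
    (h12 : PLex u₂ u₁) (h2' : PLex u' u₂)
    (hL : IsLyndon (u₁ ++ u₂)) (hL' : IsLyndon u') :
    (PLex (u₁ ++ u') (u₁ ++ u₂ ++ u') ∧ PLex u' (u₁ ++ u')) ∧
    (PLex (u₂ ++ u') (u₁ ++ u₂ ++ u') ∧ PLex u' (u₂ ++ u')) := by
  have h₂' : PLex u' (u₂ ++ u') := hL'.plex_append_of_plex h₂ h2'
  refine ⟨⟨?_, hL'.plex_append_of_plex h₁ (h2'.trans h12)⟩, ?_, h₂'⟩
  · simpa only [List.append_assoc] using h₂'.append_left u₁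
  · exact .inr ((hL.prec_of_append h₁ h₂).append u' u')

/-- Let `u₁ >_lex u₂ >_lex u'` be nonempty words with `u₁u₂` and `u'`
Lyndon. Then `u₁u₂u' >_lex u₁u' >_lex u'` and `u₁u₂u' >_lex u₂u' >_lex u'`. -/
theorem plex_concat_chain (u₁ u₂ u' : List X) (h₁ : u₁ ≠ []) (h₂ : u₂ ≠ [])
    (h' : u' ≠ []) (h12 : PLex u₂ u₁) (h2' : PLex u' u₂)
    (hL : IsLyndon (u₁ ++ u₂)) (hL' : IsLyndon u') :
    (PLex (u₁ ++ u') (u₁ ++ u₂ ++ u') ∧ PLex u' (u₁ ++ u')) ∧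
    (PLex (u₂ ++ u') (u₁ ++ u₂ ++ u') ∧ PLex u' (u₂ ++ u')) :=
  plex_concat_chain_general u₁ u₂ u' h₁ h₂ h12 h2' hL hL'
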